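/- Let M be a rank m holomorphic vector bundle over ℙ¹ trivialized over the standard charts U₀, U₁ (with coordinate μ on U₁), with frames s₁,…,s_m over U₀ and t₁,…,t_m over U₁. Suppose the transition matrix expressing the s_i in terms of the t_j over U₀ ∩ U₁ is upper triangular with diagonal entries x_i·μ for nonzero constants x_i, and with strictly upper triangular entries lying in μ·ℂ[μ]. Then M ≅ O_{ℙ¹}(1)^{⊕ m}. -/

import Mathlib

open Matrix

/-!
The frame change on `U₁` is the upper triangular matrix `A(μ)` with diagonal `x_i` and
off-diagonal entries `g_ij(μ) / μ`, which are polynomials because `g_ij(0) = 0`. It is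
invertible for every `μ` since its diagonal is constant and nonzero, and `T(μ) = μ · A(μ)`,
so the frame on `U₀` need not change at all.
-/

namespace Polynomial

theorem eval_eq_eval_divX_mul {R : Type*} [Semiring R] {p : R[X]} (hp : p.coeff 0 = 0) (z : R) :
    p.eval z = p.divX.eval z * z := by
  conv_lhs => rw [← divX_mul_X_add p]
  simp [hp]

end Polynomial

namespace Matrix

variable {n R : Type*} [LinearOrder n]

def upperTriangularOf [Zero R] (d : n → R) (u : n → n → R) : Matrix n n R :=
  of fun i j => if i = j then d i else if i < j then u i j else 0

theorem isUpperTriangular_upperTriangularOf [Zero R] (d : n → R) (u : n → n → R) :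
    (upperTriangularOf d u).IsUpperTriangular := by
  intro i j (hji : j < i)
  simp [upperTriangularOf, hji.ne', hji.not_gt]

theorem det_upperTriangularOf [Fintype n] [CommRing R] (d : n → R) (u : n → n → R) :
    (upperTriangularOf d u).det = ∏ i, d i := by
  rw [det_of_isUpperTriangular (isUpperTriangular_upperTriangularOf d u)]
  simp [upperTriangularOf]

theorem isUnit_upperTriangularOf [Fintype n] [CommRing R] {d : n → R} (hd : ∀ i, IsUnit (d i))
    (u : n → n → R) : IsUnit (upperTriangularOf d u) := by
  rw [isUnit_iff_isUnit_det, det_upperTriangularOf]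
  exact IsUnit.prod_univ_iff.2 hd

theorem smul_upperTriangularOf [MulZeroClass R] (c : R) (d : n → R) (u : n → n → R) :
    c • upperTriangularOf d u = upperTriangularOf (c • d) (c • u) := by
  ext i j
  simp only [upperTriangularOf, smul_apply, of_apply, Pi.smul_apply, smul_eq_mul]
  split_ifs <;> simp

theorem differentiable_upperTriangularOf_apply {𝕜 : Type*} [NontriviallyNormedField 𝕜]
    {d : 𝕜 → n → 𝕜} {u : 𝕜 → n → n → 𝕜} (hd : ∀ i, Differentiable 𝕜 (d · i))
    (hu : ∀ i j, Differentiable 𝕜 (u · i j)) (i j : n) :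
    Differentiable 𝕜 (fun z => upperTriangularOf (d z) (u z) i j) := by
  simp only [upperTriangularOf, of_apply]
  split_ifs
  exacts [hd i, hu i j, differentiable_const 0]

end Matrix

/-- A rank `m` holomorphic vector bundle on `ℙ¹`, given by a
transition matrix `T(μ)` over `U₀ ∩ U₁ = ℂ^×` which is upper triangular with
diagonal entries `x_i μ` (`x_i ≠ 0`) and strictly upper triangular entries in
`μ·ℂ[μ]`, is isomorphic to `O(1)^{⊕m}`.  At the level of cocycles: there are
matrices `A(μ)` (holomorphic and invertible for all `μ`, i.e. a change of frame
on `U₁`) and `B(λ)` (holomorphic and invertible for all `λ`, a change of frame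
on `U₀`) with `T(μ) = A(μ) · (μ·𝟙) · B(μ⁻¹)` for all `μ ≠ 0`, where `μ·𝟙` is
the transition matrix of `O(1)^{⊕m}`. -/
theorem stmt17 (m : ℕ) (x : Fin m → ℂ) (hx : ∀ i, x i ≠ 0)
    (g : Fin m → Fin m → Polynomial ℂ)
    (hg : ∀ i j, (g i j).coeff 0 = 0)
    (T : ℂ → Matrix (Fin m) (Fin m) ℂ)
    (hT : ∀ (μ : ℂ) (i j : Fin m),
      T μ i j = if i = j then x i * μ
        else if i < j then (g i j).eval μ else 0) :
    ∃ A B : ℂ → Matrix (Fin m) (Fin m) ℂ,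
      (∀ i j : Fin m, Differentiable ℂ (fun z => A z i j)) ∧
      (∀ i j : Fin m, Differentiable ℂ (fun z => B z i j)) ∧
      (∀ z : ℂ, IsUnit (A z)) ∧ (∀ z : ℂ, IsUnit (B z)) ∧
      (∀ μ : ℂ, μ ≠ 0 →
        T μ = A μ * (μ • (1 : Matrix (Fin m) (Fin m) ℂ)) * B μ⁻¹) := by
  refine ⟨fun z => upperTriangularOf x fun i j => (g i j).divX.eval z, fun _ => 1,
    differentiable_upperTriangularOf_apply (fun _ => differentiable_const _)
      (fun i j => Polynomial.differentiable _),
    fun _ _ => differentiable_const _,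
    fun _ => isUnit_upperTriangularOf (fun i => (hx i).isUnit) _,
    fun _ => isUnit_one, fun μ _ => ?_⟩
  have hTμ : T μ = upperTriangularOf (fun i => x i * μ) fun i j => (g i j).eval μ :=
    ext (hT μ)
  rw [hTμ, mul_one, Matrix.mul_smul, mul_one, smul_upperTriangularOf]
  congr 1
  · ext i
    exact mul_comm _ _
  · ext i j
    rw [Polynomial.eval_eq_eval_divX_mul (hg i j), Pi.smul_apply, Pi.smul_apply, smul_eq_mul,
      mul_comm]
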